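/- arXiv:2512.15523 — 3 statements merged into one kernel-verified Lean document; each statement's English description precedes it below -/
import Mathlib

section
/- Let V be a finite-dimensional real vector space and let ψ, φ be commuting invertible elements of gl(V). For integers i, j define the bracket [A,B] := ψ A ψ^i φ^j B φ^{-1} − φ B ψ^{i+2} φ^{j-2} A ψ^{-1} on gl(V), and let α = Ad_ψ, β = Ad_φ. Then the BiHom skew-symmetry holds: [β(A), α(B)] = −[β(B), α(A)] for all A, B in gl(V). -/
open Matrix
set_option maxHeartbeats 1000000

/-- The BiHom-type bracket on `gl(V)` built from two invertible elements `ψ, φ`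
and integers `i, j`:  `[A,B] = ψ A ψ^i φ^j B φ⁻¹ − φ B ψ^(i+2) φ^(j-2) A ψ⁻¹`. -/
noncomputable def biBracket {n : ℕ} (ψ φ : (Matrix (Fin n) (Fin n) ℝ)ˣ) (i j : ℤ)
    (A B : Matrix (Fin n) (Fin n) ℝ) : Matrix (Fin n) (Fin n) ℝ :=
  (ψ : Matrix (Fin n) (Fin n) ℝ) * A * ((ψ ^ i : (Matrix (Fin n) (Fin n) ℝ)ˣ) : Matrix (Fin n) (Fin n) ℝ) *
      ((φ ^ j : (Matrix (Fin n) (Fin n) ℝ)ˣ) : Matrix (Fin n) (Fin n) ℝ) * B *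
      ((φ⁻¹ : (Matrix (Fin n) (Fin n) ℝ)ˣ) : Matrix (Fin n) (Fin n) ℝ)
  - (φ : Matrix (Fin n) (Fin n) ℝ) * B * ((ψ ^ (i + 2) : (Matrix (Fin n) (Fin n) ℝ)ˣ) : Matrix (Fin n) (Fin n) ℝ) *
      ((φ ^ (j - 2) : (Matrix (Fin n) (Fin n) ℝ)ˣ) : Matrix (Fin n) (Fin n) ℝ) * A *
      ((ψ⁻¹ : (Matrix (Fin n) (Fin n) ℝ)ˣ) : Matrix (Fin n) (Fin n) ℝ)

/-- `Ad_ψ(X) = ψ X ψ⁻¹`. -/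
noncomputable def adU {n : ℕ} (ψ : (Matrix (Fin n) (Fin n) ℝ)ˣ)
    (X : Matrix (Fin n) (Fin n) ℝ) : Matrix (Fin n) (Fin n) ℝ :=
  (ψ : Matrix (Fin n) (Fin n) ℝ) * X * ((ψ⁻¹ : (Matrix (Fin n) (Fin n) ℝ)ˣ) : Matrix (Fin n) (Fin n) ℝ)

lemma biBracket_aux {n : ℕ} (u v w u' v' w' : Matrix (Fin n) (Fin n) ℝ)
    (A B : Matrix (Fin n) (Fin n) ℝ) (h1 : u = u') (h2 : v = v') (h3 : w = w') :
    u * A * v * B * w = u' * A * v' * B * w' := by rw [h1, h2, h3]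

/-- BiHom skew-symmetry: `[β(A), α(B)] = −[β(B), α(A)]` for `α = Ad_ψ`, `β = Ad_φ`. -/
theorem biBracket_skew {n : ℕ} (ψ φ : (Matrix (Fin n) (Fin n) ℝ)ˣ)
    (hcomm : Commute ψ φ) (i j : ℤ) (A B : Matrix (Fin n) (Fin n) ℝ) :
    biBracket ψ φ i j (adU φ A) (adU ψ B) = - biBracket ψ φ i j (adU φ B) (adU ψ A) := by
  have hc : ∀ a b : ℤ, ψ ^ a * φ ^ b = φ ^ b * ψ ^ a := fun a b => (hcomm.zpow_zpow a b)
  -- unit identities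
  have e1 : (ψ * φ : (Matrix (Fin n) (Fin n) ℝ)ˣ) = φ * ψ := hcomm
  have e2 : (φ⁻¹ * ψ ^ i * (φ ^ j * ψ) : (Matrix (Fin n) (Fin n) ℝ)ˣ)
      = ψ⁻¹ * ψ ^ (i + 2) * (φ ^ (j - 2) * φ) := by
    have l : (φ⁻¹ * ψ ^ i * (φ ^ j * ψ) : (Matrix (Fin n) (Fin n) ℝ)ˣ)
        = ψ ^ (i + 1) * φ ^ (j - 1) := by
      have := hc i (-1)
      have h2 := hc 1 j
      calc φ⁻¹ * ψ ^ i * (φ ^ j * ψ)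
          = φ ^ (-1 : ℤ) * ψ ^ i * (φ ^ j * ψ ^ (1 : ℤ)) := by
            rw [_root_.zpow_neg_one, zpow_one]
        _ = ψ ^ i * φ ^ (-1 : ℤ) * (ψ ^ (1 : ℤ) * φ ^ j) := by rw [← hc i (-1), ← hc 1 j]
        _ = ψ ^ i * (φ ^ (-1 : ℤ) * ψ ^ (1 : ℤ)) * φ ^ j := by group
        _ = ψ ^ i * (ψ ^ (1 : ℤ) * φ ^ (-1 : ℤ)) * φ ^ j := by rw [hc 1 (-1)]
        _ = ψ ^ (i + 1) * φ ^ (j - 1) := by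
            rw [← mul_assoc, ← _root_.zpow_add, mul_assoc, ← _root_.zpow_add]
            ring_nf
    have r : (ψ⁻¹ * ψ ^ (i + 2) * (φ ^ (j - 2) * φ) : (Matrix (Fin n) (Fin n) ℝ)ˣ)
        = ψ ^ (i + 1) * φ ^ (j - 1) := by
      calc ψ⁻¹ * ψ ^ (i + 2) * (φ ^ (j - 2) * φ)
          = ψ ^ (-1 : ℤ) * ψ ^ (i + 2) * (φ ^ (j - 2) * φ ^ (1 : ℤ)) := by
            rw [_root_.zpow_neg_one, zpow_one]
        _ = ψ ^ (-1 + (i + 2)) * φ ^ (j - 2 + 1) := by rw [← _root_.zpow_add, ← _root_.zpow_add]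
        _ = ψ ^ (i + 1) * φ ^ (j - 1) := by ring_nf
    rw [l, r]
  have e3 : (ψ⁻¹ * φ⁻¹ : (Matrix (Fin n) (Fin n) ℝ)ˣ) = φ⁻¹ * ψ⁻¹ := by
    have := hc (-1) (-1)
    simpa [_root_.zpow_neg_one] using this
  -- lift to matrices
  have E1 : (ψ : Matrix (Fin n) (Fin n) ℝ) * φ = (φ : Matrix (Fin n) (Fin n) ℝ) * ψ :=
    congrArg Units.val e1
  have E2 : ((φ⁻¹ : (Matrix (Fin n) (Fin n) ℝ)ˣ) : Matrix (Fin n) (Fin n) ℝ)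
        * ((ψ ^ i : (Matrix (Fin n) (Fin n) ℝ)ˣ) : Matrix (Fin n) (Fin n) ℝ)
        * (((φ ^ j : (Matrix (Fin n) (Fin n) ℝ)ˣ) : Matrix (Fin n) (Fin n) ℝ) * ψ)
      = ((ψ⁻¹ : (Matrix (Fin n) (Fin n) ℝ)ˣ) : Matrix (Fin n) (Fin n) ℝ)
        * ((ψ ^ (i + 2) : (Matrix (Fin n) (Fin n) ℝ)ˣ) : Matrix (Fin n) (Fin n) ℝ)
        * (((φ ^ (j - 2) : (Matrix (Fin n) (Fin n) ℝ)ˣ) : Matrix (Fin n) (Fin n) ℝ) * φ) := by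
    have := congrArg Units.val e2
    simpa [Units.val_mul] using this
  have E3 : ((ψ⁻¹ : (Matrix (Fin n) (Fin n) ℝ)ˣ) : Matrix (Fin n) (Fin n) ℝ)
        * ((φ⁻¹ : (Matrix (Fin n) (Fin n) ℝ)ˣ) : Matrix (Fin n) (Fin n) ℝ)
      = ((φ⁻¹ : (Matrix (Fin n) (Fin n) ℝ)ˣ) : Matrix (Fin n) (Fin n) ℝ)
        * ((ψ⁻¹ : (Matrix (Fin n) (Fin n) ℝ)ˣ) : Matrix (Fin n) (Fin n) ℝ) := by
    have := congrArg Units.val e3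
    simpa [Units.val_mul] using this
  simp only [biBracket, adU]
  rw [neg_sub]
  congr 1
  · -- first terms
    calc (ψ : Matrix (Fin n) (Fin n) ℝ) * ((φ : Matrix (Fin n) (Fin n) ℝ) * A * ↑φ⁻¹) * ↑(ψ ^ i)
          * ↑(φ ^ j) * ((ψ : Matrix (Fin n) (Fin n) ℝ) * B * ↑ψ⁻¹) * ↑φ⁻¹
        = ((ψ : Matrix (Fin n) (Fin n) ℝ) * φ) * A
          * ((↑φ⁻¹ * ↑(ψ ^ i) * (↑(φ ^ j) * (ψ : Matrix (Fin n) (Fin n) ℝ))) : Matrix (Fin n) (Fin n) ℝ)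
          * B * ((↑ψ⁻¹ * ↑φ⁻¹ : Matrix (Fin n) (Fin n) ℝ)) := by
          simp only [mul_assoc]
      _ = ((φ : Matrix (Fin n) (Fin n) ℝ) * ψ) * A
          * ((↑ψ⁻¹ * ↑(ψ ^ (i + 2)) * (↑(φ ^ (j - 2)) * (φ : Matrix (Fin n) (Fin n) ℝ))) : Matrix (Fin n) (Fin n) ℝ)
          * B * ((↑φ⁻¹ * ↑ψ⁻¹ : Matrix (Fin n) (Fin n) ℝ)) := by
          rw [E1, E2, E3]
      _ = (φ : Matrix (Fin n) (Fin n) ℝ) * ((ψ : Matrix (Fin n) (Fin n) ℝ) * A * ↑ψ⁻¹) * ↑(ψ ^ (i + 2))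
          * ↑(φ ^ (j - 2)) * ((φ : Matrix (Fin n) (Fin n) ℝ) * B * ↑φ⁻¹) * ↑ψ⁻¹ := by
          simp only [mul_assoc]
  · -- second terms
    calc (φ : Matrix (Fin n) (Fin n) ℝ) * ((ψ : Matrix (Fin n) (Fin n) ℝ) * B * ↑ψ⁻¹) * ↑(ψ ^ (i + 2))
          * ↑(φ ^ (j - 2)) * ((φ : Matrix (Fin n) (Fin n) ℝ) * A * ↑φ⁻¹) * ↑ψ⁻¹
        = ((φ : Matrix (Fin n) (Fin n) ℝ) * ψ) * B
          * ((↑ψ⁻¹ * ↑(ψ ^ (i + 2)) * (↑(φ ^ (j - 2)) * (φ : Matrix (Fin n) (Fin n) ℝ))) : Matrix (Fin n) (Fin n) ℝ)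
          * A * ((↑φ⁻¹ * ↑ψ⁻¹ : Matrix (Fin n) (Fin n) ℝ)) := by
          simp only [mul_assoc]
      _ = ((ψ : Matrix (Fin n) (Fin n) ℝ) * φ) * B
          * ((↑φ⁻¹ * ↑(ψ ^ i) * (↑(φ ^ j) * (ψ : Matrix (Fin n) (Fin n) ℝ))) : Matrix (Fin n) (Fin n) ℝ)
          * A * ((↑ψ⁻¹ * ↑φ⁻¹ : Matrix (Fin n) (Fin n) ℝ)) := by
          rw [E1, E2, E3]
      _ = (ψ : Matrix (Fin n) (Fin n) ℝ) * ((φ : Matrix (Fin n) (Fin n) ℝ) * B * ↑φ⁻¹) * ↑(ψ ^ i)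
          * ↑(φ ^ j) * ((ψ : Matrix (Fin n) (Fin n) ℝ) * A * ↑ψ⁻¹) * ↑φ⁻¹ := by
          simp only [mul_assoc]
end

section
/- Let ψ, φ be commuting invertible elements of gl(V), i, j integers, α = Ad_ψ, β = Ad_φ, and define [A,B] := ψ A ψ^i φ^j B φ^{-1} − φ B ψ^{i+2} φ^{j-2} A ψ^{-1}. Then the BiHom–Jacobi identity holds: [β²(A),[β(B),α(C)]] + [β²(B),[β(C),α(A)]] + [β²(C),[β(A),α(B)]] = 0 for all A, B, C in gl(V). -/
open Matrix

/-- The BiHom–Jacobi identity for the deformed bracket, with `α = Ad_ψ`, `β = Ad_φ`: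
`[β²(A),[β(B),α(C)]] + [β²(B),[β(C),α(A)]] + [β²(C),[β(A),α(B)]] = 0`. -/
theorem biBracket_biHom_jacobi {n : ℕ} (ψ φ : (Matrix (Fin n) (Fin n) ℝ)ˣ)
    (hcomm : Commute ψ φ) (i j : ℤ) (A B C : Matrix (Fin n) (Fin n) ℝ) :
    biBracket ψ φ i j (adU φ (adU φ A)) (biBracket ψ φ i j (adU φ B) (adU ψ C))
      + biBracket ψ φ i j (adU φ (adU φ B)) (biBracket ψ φ i j (adU φ C) (adU ψ A))
      + biBracket ψ φ i j (adU φ (adU φ C)) (biBracket ψ φ i j (adU φ A) (adU ψ B)) = 0 := by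
  set f : ℤ → ℤ → (Matrix (Fin n) (Fin n) ℝ)ˣ := fun a b => ψ ^ a * φ ^ b with hf
  have hmul : ∀ a b c d : ℤ, f a b * f c d = f (a + c) (b + d) := by
    intro a b c d
    simp only [hf]
    rw [_root_.zpow_add, _root_.zpow_add, (hcomm.symm.zpow_zpow b c).mul_mul_mul_comm (ψ ^ a) (φ ^ d)]
  have m2 : ∀ a b c d : ℤ, ((f a b : (Matrix (Fin n) (Fin n) ℝ)ˣ) : Matrix (Fin n) (Fin n) ℝ) * ((f c d : (Matrix (Fin n) (Fin n) ℝ)ˣ) : Matrix (Fin n) (Fin n) ℝ) = ((f (a+c) (b+d) : (Matrix (Fin n) (Fin n) ℝ)ˣ) : Matrix (Fin n) (Fin n) ℝ) := by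
    intro a b c d; rw [← Units.val_mul, hmul]
  have m1 : ∀ (a b c d : ℤ) (x : Matrix (Fin n) (Fin n) ℝ), ((f a b : (Matrix (Fin n) (Fin n) ℝ)ˣ) : Matrix (Fin n) (Fin n) ℝ) * (((f c d : (Matrix (Fin n) (Fin n) ℝ)ˣ) : Matrix (Fin n) (Fin n) ℝ) * x) = ((f (a+c) (b+d) : (Matrix (Fin n) (Fin n) ℝ)ˣ) : Matrix (Fin n) (Fin n) ℝ) * x := by
    intro a b c d x; rw [← mul_assoc, m2]
  have e5 : ψ ^ i = f i 0 := by simp [hf]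
  have e6 : φ ^ j = f 0 j := by simp [hf]
  have e7 : ψ ^ (i+2) = f (i+2) 0 := by simp [hf]
  have e8 : φ ^ (j-2) = f 0 (j-2) := by simp [hf]
  have e3 : ψ⁻¹ = f (-1) 0 := by simp [hf]
  have e4 : φ⁻¹ = f 0 (-1) := by simp [hf]
  have e1 : ψ = f 1 0 := by simp [hf]
  have e2 : φ = f 0 1 := by simp [hf]
  simp only [biBracket, adU]
  rw [e7, e8, e5, e6, e3, e4, e1, e2]
  simp only [mul_sub, sub_mul, mul_assoc, m1, m2]
  ring_nf
  abel
end

section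
/- Let L = [[a, c],[c, b]] be a symmetric 2×2 real matrix, B(L) = [[0, c],[−c, 0]], ψ = H(λ) the hyperbolic rotation [[cosh λ, sinh λ],[sinh λ, cosh λ]], and φ = H(−λ). For integers i, j, the trace of the deformed bracket ψ B(L) ψ^i φ^j L φ^{-1} − φ L ψ^{i+2} φ^{j-2} B(L) ψ^{-1} equals 2 c (a − b) sinh((i−j+2)λ) cosh(4λ) (up to the normalization used in the paper); in particular it is nonzero whenever sinh((i−j+2)λ) ≠ 0 and c(a−b) ≠ 0. -/
open Matrix Real

/-- The 2×2 hyperbolic rotation matrix; `ψ^k = H(kλ)` and `φ^k = H(−kλ)` by the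
one-parameter group property, for `ψ = H(λ)`, `φ = H(−λ)`. -/
noncomputable def hypMat (l : ℝ) : Matrix (Fin 2) (Fin 2) ℝ :=
  !![Real.cosh l, Real.sinh l; Real.sinh l, Real.cosh l]

set_option maxHeartbeats 2000000 in
/-- Trace obstruction in the asymmetric hyperbolic case: for `L = [[a,c],[c,b]]`,
`B(L) = [[0,c],[−c,0]]`, `ψ = H(λ)`, `φ = H(−λ)`, the trace of the deformed bracket
`ψ B(L) ψ^i φ^j L φ⁻¹ − φ L ψ^(i+2) φ^(j-2) B(L) ψ⁻¹` equals
`2 c (a−b) sinh((i−j+2)λ) cosh(4λ)`; in particular it is nonzero whenever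
`sinh((i−j+2)λ) ≠ 0` and `c(a−b) ≠ 0`. -/
theorem hyperbolic_trace_obstruction (a b c l : ℝ) (i j : ℤ) :
    (hypMat l * !![(0:ℝ), c; -c, 0] * hypMat ((i : ℝ) * l) * hypMat (-((j : ℝ) * l)) *
        !![a, c; c, b] * hypMat l
      - hypMat (-l) * !![a, c; c, b] * hypMat (((i : ℝ) + 2) * l) *
        hypMat (-(((j : ℝ) - 2) * l)) * !![(0:ℝ), c; -c, 0] * hypMat (-l)).trace
      = 2 * c * (a - b) * Real.sinh (((i : ℝ) - (j : ℝ) + 2) * l) * Real.cosh (4 * l)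
    ∧ (Real.sinh (((i : ℝ) - (j : ℝ) + 2) * l) ≠ 0 → c * (a - b) ≠ 0 →
       (hypMat l * !![(0:ℝ), c; -c, 0] * hypMat ((i : ℝ) * l) * hypMat (-((j : ℝ) * l)) *
          !![a, c; c, b] * hypMat l
        - hypMat (-l) * !![a, c; c, b] * hypMat (((i : ℝ) + 2) * l) *
          hypMat (-(((j : ℝ) - 2) * l)) * !![(0:ℝ), c; -c, 0] * hypMat (-l)).trace ≠ 0) := by
  have key : (hypMat l * !![(0:ℝ), c; -c, 0] * hypMat ((i : ℝ) * l) * hypMat (-((j : ℝ) * l)) *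
        !![a, c; c, b] * hypMat l
      - hypMat (-l) * !![a, c; c, b] * hypMat (((i : ℝ) + 2) * l) *
        hypMat (-(((j : ℝ) - 2) * l)) * !![(0:ℝ), c; -c, 0] * hypMat (-l)).trace
      = 2 * c * (a - b) * Real.sinh (((i : ℝ) - (j : ℝ) + 2) * l) * Real.cosh (4 * l) := by
    have h1 : ((i : ℝ) + 2) * l = (i : ℝ) * l + (l + l) := by ring
    have h2 : (((j : ℝ) - 2) * l) = (j : ℝ) * l - (l + l) := by ring
    have h3 : ((i : ℝ) - (j : ℝ) + 2) * l = ((i : ℝ) * l - (j : ℝ) * l) + (l + l) := by ring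
    have h4 : (4 : ℝ) * l = l + l + (l + l) := by ring
    simp only [hypMat, Matrix.trace_fin_two, Matrix.mul_fin_two, Matrix.sub_apply,
      Matrix.of_apply, Matrix.cons_val', Matrix.cons_val_zero, Matrix.cons_val_one,
      Matrix.head_cons, Matrix.head_fin_const, Matrix.empty_val', Matrix.cons_val_fin_one,
      h1, h2, h3, h4, Real.cosh_eq, Real.sinh_eq, Real.exp_add, Real.exp_sub, Real.exp_neg]
    have he : Real.exp l ≠ 0 := Real.exp_ne_zero l
    have hei : Real.exp ((i : ℝ) * l) ≠ 0 := Real.exp_ne_zero _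
    have hej : Real.exp ((j : ℝ) * l) ≠ 0 := Real.exp_ne_zero _
    field_simp
    ring
  refine ⟨key, fun hs hc => ?_⟩
  rw [key]
  have h2 : (2:ℝ) * c * (a - b) ≠ 0 := by
    rw [mul_assoc]; exact mul_ne_zero two_ne_zero hc
  exact mul_ne_zero (mul_ne_zero h2 hs) (ne_of_gt (Real.cosh_pos (4 * l)))
end
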